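/- Suppose ω ≠ 0, g ≠ 0, κ > 0, γ > 0 and d ∈ (−1,1). Then the only constant solution of the Maxwell–Bloch equations is (A, S, D) ≡ (0, 0, d). Equivalently: if A₀, S₀ ∈ ℂ and D₀ ∈ ℝ satisfy −(κ + iω)A₀ + g S₀ = 0, −(γ + iω)S₀ + g A₀ D₀ = 0 and −4g Re( conj(A₀) S₀ ) − 2γ(D₀ − d) = 0, then A₀ = 0, S₀ = 0 and D₀ = d. -/

import Mathlib

/-!
At an equilibrium the field equation gives `g S₀ = (κ + iω) A₀`; substituting into the
polarization equation yields `A₀ ((γ + iω)(κ + iω) - g² D₀) = 0`. The bracket cannot vanish,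
since its imaginary part is `ω (γ + κ) ≠ 0`, so `A₀ = 0`; then `S₀ = 0` because `g ≠ 0`, and the
inversion equation reduces to `γ (D₀ - d) = 0`.
-/

open Complex

lemma mul_sub_sq_mul_eq_zero_of_equilibrium {R : Type*} [CommRing R] {p q g a s D : R}
    (h1 : -p * a + g * s = 0) (h2 : -q * s + g * a * D = 0) :
    a * (q * p - g ^ 2 * D) = 0 := by
  linear_combination (-q) * h1 - g * h2

lemma im_add_mul_I_mul_add_mul_I (a b ω : ℝ) :
    (((a : ℂ) + ω * I) * (b + ω * I)).im = ω * (a + b) := by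
  simp only [mul_im, add_re, add_im, ofReal_re, ofReal_im, mul_re, mul_im, I_re, I_im]
  ring

lemma add_mul_I_mul_add_mul_I_ne_ofReal {a b ω : ℝ} (hω : ω ≠ 0) (hab : a + b ≠ 0) (r : ℝ) :
    ((a : ℂ) + ω * I) * (b + ω * I) ≠ r := by
  intro h
  have him := congrArg im h
  rw [im_add_mul_I_mul_add_mul_I, ofReal_im] at him
  exact mul_ne_zero hω hab him

theorem maxwell_bloch_unique_constant_solution
    (ω g κ γ d : ℝ) (hω : ω ≠ 0) (hg : g ≠ 0) (hκ : 0 < κ) (hγ : 0 < γ)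
    (A₀ S₀ : ℂ) (D₀ : ℝ)
    (h1 : -((κ : ℂ) + (ω : ℂ) * Complex.I) * A₀ + (g : ℂ) * S₀ = 0)
    (h2 : -((γ : ℂ) + (ω : ℂ) * Complex.I) * S₀ + (g : ℂ) * A₀ * (D₀ : ℂ) = 0)
    (h3 : -4 * g * ((starRingEnd ℂ) A₀ * S₀).re - 2 * γ * (D₀ - d) = 0) :
    A₀ = 0 ∧ S₀ = 0 ∧ D₀ = d := by
  have hA : A₀ = 0 := by
    refine (mul_eq_zero.mp (mul_sub_sq_mul_eq_zero_of_equilibrium h1 h2)).resolve_right ?_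
    rw [sub_eq_zero, ← ofReal_pow, ← ofReal_mul]
    exact add_mul_I_mul_add_mul_I_ne_ofReal hω (by positivity) _
  have hS : S₀ = 0 := by
    rw [hA, mul_zero, zero_add] at h1
    exact (mul_eq_zero.mp h1).resolve_left (ofReal_ne_zero.mpr hg)
  refine ⟨hA, hS, ?_⟩
  rw [hS, mul_zero, zero_re, mul_zero, zero_sub, neg_eq_zero] at h3
  linarith [(mul_eq_zero.mp h3).resolve_left (by positivity)]
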